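/- For a Van der Waals gas as above, the characteristic speeds λ₁ = u − c and λ₂ = u + c, expressed in the Riemann invariants w₁ = u − H, w₂ = u + H with u = (w₁+w₂)/2 and H = (w₂−w₁)/2, satisfy ∂λ₁/∂w₁ = ∂λ₂/∂w₂ = (ν/(2(ν−1)))·(1 + b̃ H^(ν−1)) > 0 and ∂λ₁/∂w₂ = ∂λ₂/∂w₁ = (1/(2(ν−1)))·((ν−2) − b̃ ν H^(ν−1)), where ν = (γ₀+1)/(γ₀−1). -/

import Mathlib

/-! The Riemann invariants enter `λ₁,₂ = u ∓ c(H)` only through `u = (w₁ + w₂)/2` and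
`H = (w₂ − w₁)/2`, so by the chain rule each partial derivative is `(1 ± c'(H))/2`. For
`c(H) = (1 + b̃ H^(ν−1)) H / (ν − 1)` one has `c'(H) = (1 + b̃ ν H^(ν−1)) / (ν − 1)`, and
`(1 ± c'(H))/2` simplify to the stated values. -/

lemma hasDerivAt_one_add_mul_rpow_mul {b p x : ℝ} (hx : x ≠ 0) :
    HasDerivAt (fun y => (1 + b * y ^ p) * y) (1 + b * (p + 1) * x ^ p) x := by
  have hpow : HasDerivAt (fun y : ℝ => y ^ p) (p * x ^ (p - 1)) x :=
    Real.hasDerivAt_rpow_const (Or.inl hx)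
  refine (((hpow.const_mul b).const_add 1).mul (hasDerivAt_id x)).congr_deriv ?_
  have hsplit : x ^ (p - 1) * x = x ^ p := by
    rw [← Real.rpow_add_one hx, sub_add_cancel]
  simp only [id_eq, mul_one]
  linear_combination b * p * hsplit

noncomputable def vdwSoundSpeed (ν b H : ℝ) : ℝ := 1 / (ν - 1) * (1 + b * H ^ (ν - 1)) * H

lemma hasDerivAt_vdwSoundSpeed {ν b H : ℝ} (hH : H ≠ 0) :
    HasDerivAt (vdwSoundSpeed ν b) (1 / (ν - 1) * (1 + b * ν * H ^ (ν - 1))) H := by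
  have hformula :=
    (hasDerivAt_one_add_mul_rpow_mul (b := b) (p := ν - 1) hH).const_mul (1 / (ν - 1))
  rw [sub_add_cancel] at hformula
  refine hformula.congr_of_eventuallyEq (.of_forall fun x => ?_)
  simp only [vdwSoundSpeed, mul_assoc]

section HalfDifference

variable {f : ℝ → ℝ} {f' a b : ℝ}

lemma HasDerivAt.comp_half_sub (hf : HasDerivAt f f' ((b - a) / 2)) :
    HasDerivAt (fun x => f ((b - x) / 2)) (-(f' / 2)) a := by
  have hinner : HasDerivAt (fun x : ℝ => (b - x) / 2) (-1 / 2) a := by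
    simpa using ((hasDerivAt_id a).const_sub b).div_const 2
  exact (hf.comp a hinner).congr_deriv (by ring)

lemma HasDerivAt.comp_sub_half (hf : HasDerivAt f f' ((b - a) / 2)) :
    HasDerivAt (fun y => f ((y - a) / 2)) (f' / 2) b := by
  have hinner : HasDerivAt (fun y : ℝ => (y - a) / 2) (1 / 2) b := by
    simpa using ((hasDerivAt_id b).sub_const a).div_const 2
  exact (hf.comp b hinner).congr_deriv (by ring)

end HalfDifference

/-- Partial derivatives of the characteristic speeds `λ₁ = u − c`, `λ₂ = u + c` of a
Van der Waals gas in the Riemann invariants `w₁, w₂` (with `u = (w₁+w₂)/2`,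
`H = (w₂−w₁)/2`, `c(H) = (1/(ν−1))(1 + b̃ H^(ν−1)) H`):
`∂λ₁/∂w₁ = ∂λ₂/∂w₂ = (ν/(2(ν−1)))(1 + b̃ H^(ν−1)) > 0` and
`∂λ₁/∂w₂ = ∂λ₂/∂w₁ = (1/(2(ν−1)))((ν−2) − b̃ ν H^(ν−1))`. -/
theorem vdw_characteristic_derivatives (γ ν btil : ℝ) (hγ : 1 < γ)
    (hν : ν = (γ + 1) / (γ - 1)) (hb : 0 ≤ btil)
    (cH : ℝ → ℝ)
    (hcH : ∀ x > (0:ℝ), cH x = 1 / (ν - 1) * (1 + btil * x ^ (ν - 1)) * x)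
    (w1 w2 Hv : ℝ) (hHv : Hv = (w2 - w1) / 2) (hHpos : 0 < Hv) :
    HasDerivAt (fun x => (x + w2) / 2 - cH ((w2 - x) / 2))
      (ν / (2 * (ν - 1)) * (1 + btil * Hv ^ (ν - 1))) w1 ∧
    HasDerivAt (fun y => (w1 + y) / 2 + cH ((y - w1) / 2))
      (ν / (2 * (ν - 1)) * (1 + btil * Hv ^ (ν - 1))) w2 ∧
    0 < ν / (2 * (ν - 1)) * (1 + btil * Hv ^ (ν - 1)) ∧
    HasDerivAt (fun y => (w1 + y) / 2 - cH ((y - w1) / 2))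
      (1 / (2 * (ν - 1)) * ((ν - 2) - btil * ν * Hv ^ (ν - 1))) w2 ∧
    HasDerivAt (fun x => (x + w2) / 2 + cH ((w2 - x) / 2))
      (1 / (2 * (ν - 1)) * ((ν - 2) - btil * ν * Hv ^ (ν - 1))) w1 := by
  have hν1 : 1 < ν := by
    rw [hν, lt_div_iff₀ (by linarith)]
    linarith
  have hν1' : ν - 1 ≠ 0 := by linarith
  have hc' : HasDerivAt cH (1 / (ν - 1) * (1 + btil * ν * Hv ^ (ν - 1))) Hv := by
    refine (hasDerivAt_vdwSoundSpeed hHpos.ne').congr_of_eventuallyEq ?_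
    filter_upwards [eventually_gt_nhds hHpos] with x hx using hcH x hx
  rw [hHv] at hc'
  have hu1 : HasDerivAt (fun x => (x + w2) / 2) (1 / 2) w1 := by
    simpa using ((hasDerivAt_id w1).add_const w2).div_const 2
  have hu2 : HasDerivAt (fun y => (w1 + y) / 2) (1 / 2) w2 := by
    simpa using ((hasDerivAt_id w2).const_add w1).div_const 2
  refine ⟨(hu1.fun_sub hc'.comp_half_sub).congr_deriv ?_,
    (hu2.fun_add hc'.comp_sub_half).congr_deriv ?_, by positivity,
    (hu2.fun_sub hc'.comp_sub_half).congr_deriv ?_,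
    (hu1.fun_add hc'.comp_half_sub).congr_deriv ?_⟩ <;>
  · rw [← hHv]
    field_simp
    ring
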